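/- arXiv:1803.09771 — 3 statements merged into one kernel-verified Lean document; each statement's English description precedes it below -/
import Mathlib

section
/- Let φ be a monotone predicate on finite subsets of ℕ (if φ(F) holds and F ⊆ G then φ(G) holds), and let 𝒜 = { X ⊆ ℕ : there is a finite set F ⊆ X with φ(F) }. Then 𝒜 is a largeness class if and only if for every k ≥ 1 there exists n ∈ ℕ such that for every partition (or cover) E₀ ∪ ⋯ ∪ E_{k−1} = {0, 1, …, n}, there is some j < k with φ(E_j). -/
/-- A collection `𝒜` of subsets of ℕ is a largeness class if it is closed upward under
the superset relation, and for every `k ≥ 1` and every `k`-cover of ℕ, one of the parts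
belongs to `𝒜`. -/
def LargenessClass (𝒜 : Set (Set ℕ)) : Prop :=
  (∀ X ∈ 𝒜, ∀ Y : Set ℕ, X ⊆ Y → Y ∈ 𝒜) ∧
  (∀ k : ℕ, 1 ≤ k → ∀ Y : Fin k → Set ℕ, (⋃ j, Y j) = Set.univ → ∃ j, Y j ∈ 𝒜)

/-!
A `k`-cover is the same as a colouring with `k` colours, choosing for each point a part that
contains it. If every `n` admits a `k`-colouring of `{0, …, n}` with no colour class satisfying
`φ`, take the pointwise limit of these colourings along a nonprincipal ultrafilter: it colours
all of `ℕ`, and on every finite set it agrees with colourings of arbitrarily long segments.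
Largeness gives a colour class containing some finite `F` with `φ F`, and a colouring that
agrees with the limit on `F` then has a colour class satisfying `φ` by monotonicity.
Conversely, a cover of `ℕ` restricts to a cover of `{0, …, n}`.
-/

theorem Ultrafilter.exists_eventually_forall_mem_eq {ι α β : Type*} [Finite β]
    (U : Ultrafilter ι) (c : ι → α → β) :
    ∃ cl : α → β, ∀ F : Finset α, ∀ᶠ n in (U : Filter ι), ∀ i ∈ F, c n i = cl i := by
  choose cl hcl using fun i => (U.map fun n => c n i).eq_pure_of_finite
  refine ⟨cl, fun F => F.eventually_all.2 fun i _ => ?_⟩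
  have hmem : {cl i} ∈ U.map fun n => c n i := by rw [hcl i]; exact Ultrafilter.mem_pure.2 rfl
  exact Ultrafilter.mem_map.1 hmem

theorem Finset.exists_forall_mem_of_biUnion_eq {α ι : Type*} [DecidableEq α] [Fintype ι]
    [Nonempty ι] {s : Finset α} {E : ι → Finset α} (hE : Finset.univ.biUnion E = s) :
    ∃ c : α → ι, ∀ i ∈ s, i ∈ E (c i) := by
  have hcolor : ∀ i, ∃ j, i ∈ s → i ∈ E j := by
    intro i
    by_cases hi : i ∈ s
    · obtain ⟨j, -, hj⟩ := Finset.mem_biUnion.1 (hE ▸ hi)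
      exact ⟨j, fun _ => hj⟩
    · exact ⟨Classical.arbitrary ι, fun h => absurd h hi⟩
  choose c hc using hcolor
  exact ⟨c, hc⟩

theorem finite_covers_of_largenessClass (φ : Finset ℕ → Prop)
    (hmono : ∀ F G : Finset ℕ, F ⊆ G → φ F → φ G)
    (hlarge : LargenessClass {X : Set ℕ | ∃ F : Finset ℕ, ↑F ⊆ X ∧ φ F}) (k : ℕ) (hk : 1 ≤ k) :
    ∃ n : ℕ, ∀ E : Fin k → Finset ℕ,
      Finset.univ.biUnion E = Finset.range (n + 1) → ∃ j, φ (E j) := by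
  by_contra! hbad
  choose E hE hnotφ using hbad
  have : Nonempty (Fin k) := ⟨⟨0, hk⟩⟩
  choose c hc using fun n => Finset.exists_forall_mem_of_biUnion_eq (hE n)
  let U := Filter.hyperfilter ℕ
  obtain ⟨cl, hcl⟩ := U.exists_eventually_forall_mem_eq c
  obtain ⟨j, F, hFj, hφF⟩ := hlarge.2 k hk (fun j => cl ⁻¹' {j}) (by ext i; simp)
  have hlong : ∀ᶠ n in (U : Filter ℕ), ∀ i ∈ F, i ≤ n :=
    Filter.hyperfilter_le_cofinite <| Nat.cofinite_eq_atTop ▸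
      F.eventually_all.2 fun i _ => Filter.eventually_ge_atTop i
  obtain ⟨m, hagree, hle⟩ := ((hcl F).and hlong).exists
  have hFE : F ⊆ E m j := fun i hi => by
    have hcolor : c m i = j := (hagree i hi).trans (hFj hi)
    exact hcolor ▸ hc m i (Finset.mem_range_succ_iff.2 (hle i hi))
  exact hnotφ m j (hmono F _ hFE hφF)

theorem largenessClass_of_finite_covers (φ : Finset ℕ → Prop)
    (h : ∀ k : ℕ, 1 ≤ k → ∃ n : ℕ, ∀ E : Fin k → Finset ℕ,
      Finset.univ.biUnion E = Finset.range (n + 1) → ∃ j, φ (E j)) :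
    LargenessClass {X : Set ℕ | ∃ F : Finset ℕ, ↑F ⊆ X ∧ φ F} := by
  classical
  refine ⟨fun X ⟨F, hFX, hφF⟩ Y hXY => ⟨F, hFX.trans hXY, hφF⟩, fun k hk Y hY => ?_⟩
  have hcolor : ∀ i, ∃ j, i ∈ Y j := fun i => Set.mem_iUnion.1 (hY ▸ Set.mem_univ i)
  choose col hcol using hcolor
  obtain ⟨n, hn⟩ := h k hk
  obtain ⟨j, hφ⟩ := hn (fun j => (Finset.range (n + 1)).filter (col · = j))
    (Finset.biUnion_filter_eq_of_maps_to fun _ _ => Finset.mem_univ _)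
  refine ⟨j, _, fun i hi => ?_, hφ⟩
  obtain ⟨-, rfl⟩ := Finset.mem_filter.1 hi
  exact hcol i

/-- Compactness characterization of largeness for the class generated by a monotone
predicate `φ` on finite sets: `{X | ∃ finite F ⊆ X, φ F}` is a largeness class iff for
every `k ≥ 1` there is some `n` such that every `k`-cover of `{0, …, n}` has a part
satisfying `φ`. -/
theorem largenessClass_iff_finite_covers (φ : Finset ℕ → Prop)
    (hmono : ∀ F G : Finset ℕ, F ⊆ G → φ F → φ G) :
    LargenessClass {X : Set ℕ | ∃ F : Finset ℕ, ↑F ⊆ X ∧ φ F} ↔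
      ∀ k : ℕ, 1 ≤ k → ∃ n : ℕ, ∀ E : Fin k → Finset ℕ,
        Finset.univ.biUnion E = Finset.range (n + 1) → ∃ j, φ (E j) :=
  ⟨finite_covers_of_largenessClass φ hmono, largenessClass_of_finite_covers φ⟩
end

section
/- Let 𝒜 be a largeness class all of whose members are infinite sets, and let R be a relation between finite subsets of ℕ and natural numbers such that: for every finite set σ ⊆ ℕ, every n ∈ ℕ, and every X ∈ 𝒜, there exists a finite set ρ ⊆ X with every element of ρ greater than every element of σ and R(σ ∪ ρ, n). Then for every set A ⊆ ℕ there exists an infinite set H with H ⊆ A or H ⊆ ℕ \ A such that for every n ∈ ℕ there is a finite set σ ⊆ H with R(σ, n). -/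
/-!
One of `A`, `Aᶜ` is large, hence infinite, and inside it `H` is built as the union of a chain of
finite sets `σ₀ ⊆ σ₁ ⊆ ⋯`: stage `n + 1` extends `σₙ` by a finite set that makes `R (·, n)` true
and by one further element `> n`, which keeps `H` unbounded.
-/

theorem LargenessClass.mem_or_compl_mem {𝒜 : Set (Set ℕ)} (hL : LargenessClass 𝒜) (A : Set ℕ) :
    A ∈ 𝒜 ∨ Aᶜ ∈ 𝒜 := by
  obtain ⟨j, hj⟩ := hL.2 2 one_le_two ![A, Aᶜ] (by ext a; simp [Fin.exists_fin_two, em])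
  fin_cases j
  · exact .inl hj
  · exact .inr hj

def finiteExtensionChain (ρ : Finset ℕ → ℕ → Finset ℕ) (x : ℕ → ℕ) : ℕ → Finset ℕ
  | 0 => ∅
  | n + 1 =>
    insert (x n) (finiteExtensionChain ρ x n ∪ ρ (finiteExtensionChain ρ x n) n)

theorem coe_finiteExtensionChain_subset {X : Set ℕ} {ρ : Finset ℕ → ℕ → Finset ℕ} {x : ℕ → ℕ}
    (hρ : ∀ σ n, ↑(ρ σ n) ⊆ X) (hx : ∀ n, x n ∈ X) (n : ℕ) :
    ↑(finiteExtensionChain ρ x n) ⊆ X := by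
  induction n with
  | zero => simp [finiteExtensionChain]
  | succ n ih =>
    simp only [finiteExtensionChain, Finset.coe_insert, Finset.coe_union]
    exact Set.insert_subset (hx n) (Set.union_subset ih (hρ _ n))

theorem Set.Infinite.exists_infinite_subset_forall_exists_finset {X : Set ℕ} (hX : X.Infinite)
    {R : Finset ℕ → ℕ → Prop} (hR : ∀ σ n, ∃ ρ : Finset ℕ, ↑ρ ⊆ X ∧ R (σ ∪ ρ) n) :
    ∃ H ⊆ X, H.Infinite ∧ ∀ n, ∃ σ : Finset ℕ, ↑σ ⊆ H ∧ R σ n := by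
  choose ρ hρX hρR using hR
  choose x hxX hx using hX.exists_gt
  set σ := finiteExtensionChain ρ x
  have hσH (n : ℕ) : ↑(σ (n + 1)) ⊆ ⋃ m, (σ m : Set ℕ) :=
    Set.subset_iUnion (fun m ↦ (σ m : Set ℕ)) (n + 1)
  refine ⟨⋃ m, ↑(σ m), Set.iUnion_subset (coe_finiteExtensionChain_subset hρX hxX), ?_, ?_⟩
  · refine Set.infinite_of_not_bddAbove fun ⟨b, hb⟩ ↦ (hx b).not_ge (hb (hσH b ?_))
    exact Finset.mem_insert_self _ _
  · refine fun n ↦ ⟨σ n ∪ ρ (σ n) n, fun a ha ↦ hσH n ?_, hρR _ n⟩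
    exact Finset.mem_insert_of_mem ha

/-- Template for forcing Π⁰₂ facts with largeness classes: if `𝒜` is a largeness class
containing only infinite sets, and every finite `σ`, requirement `n`, and `X ∈ 𝒜` admit
a finite `ρ ⊆ X` beyond `σ` with `R (σ ∪ ρ) n`, then every set `A` has an infinite
subset `H` of it or of its complement meeting every requirement `R (·, n)` inside `H`. -/
theorem pi2_forcing_with_largeness (𝒜 : Set (Set ℕ)) (hL : LargenessClass 𝒜)
    (hinf : ∀ X ∈ 𝒜, X.Infinite) (R : Finset ℕ → ℕ → Prop)
    (hR : ∀ σ : Finset ℕ, ∀ n : ℕ, ∀ X ∈ 𝒜, ∃ ρ : Finset ℕ, ↑ρ ⊆ X ∧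
      (∀ a ∈ σ, ∀ b ∈ ρ, a < b) ∧ R (σ ∪ ρ) n)
    (A : Set ℕ) :
    ∃ H : Set ℕ, H.Infinite ∧ (H ⊆ A ∨ H ⊆ Aᶜ) ∧
      ∀ n, ∃ σ : Finset ℕ, ↑σ ⊆ H ∧ R σ n := by
  have extend {X : Set ℕ} (hX : X ∈ 𝒜) (σ : Finset ℕ) (n : ℕ) :
      ∃ ρ : Finset ℕ, ↑ρ ⊆ X ∧ R (σ ∪ ρ) n :=
    (hR σ n X hX).imp fun _ h ↦ ⟨h.1, h.2.2⟩
  rcases hL.mem_or_compl_mem A with hA | hA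
  · obtain ⟨H, hHA, hH⟩ := (hinf A hA).exists_infinite_subset_forall_exists_finset (extend hA)
    exact ⟨H, hH.1, .inl hHA, hH.2⟩
  · obtain ⟨H, hHA, hH⟩ := (hinf _ hA).exists_infinite_subset_forall_exists_finset (extend hA)
    exact ⟨H, hH.1, .inr hHA, hH.2⟩
end

section
/- There exists a set A ⊆ ℕ such that both A and ℕ \ A are infinite and neither the principal function p_A nor the principal function p_{ℕ\A} is dominated by any limit-computable function (equivalently, p_A and p_{ℕ\A} are both ∅′-hyperimmune). Consequently, preservation of ∅′-hyperimmunity for the pigeonhole principle cannot be extended to two functions simultaneously: for every infinite H ⊆ A, the H-computable function p_H dominates p_A, and for every infinite H ⊆ ℕ \ A, the H-computable function p_H dominates p_{ℕ\A}. -/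
/-!
Countably many limit-computable functions can be escaped by one bi-infinite set: cut ℕ into
consecutive blocks `[a j, a (j+1))`, put the odd-numbered blocks into `A` and the even-numbered
ones into its complement, and choose `a (j+1)` above the values of the `⌊j/2⌋`-th function on
`[0, a j]`. The first element of `A` (resp. `Aᶜ`) after a block of the other side has index at
most `a j`, so the principal function there exceeds that function. Limit-computable functions are
determined by their computable approximations, hence countable. On the other hand, `p_H` is
`H`-computable by an unbounded search through the counting function of `H`, and a subset has
pointwise larger principal function.
-/

/-- Oracle partial computability: `f` is partial recursive in the oracle `O`
(the analogue of `Nat.Partrec` with an extra base case for the oracle). -/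
inductive OracleRecursiveIn (O : ℕ → ℕ) : (ℕ →. ℕ) → Prop
  | zero : OracleRecursiveIn O (pure 0)
  | succ : OracleRecursiveIn O ↑Nat.succ
  | left : OracleRecursiveIn O ↑fun n : ℕ => (Nat.unpair n).1
  | right : OracleRecursiveIn O ↑fun n : ℕ => (Nat.unpair n).2
  | oracle : OracleRecursiveIn O ↑O
  | pair {f g : ℕ →. ℕ} : OracleRecursiveIn O f → OracleRecursiveIn O g →
      OracleRecursiveIn O fun n => Nat.pair <$> f n <*> g n
  | comp {f g : ℕ →. ℕ} : OracleRecursiveIn O f → OracleRecursiveIn O g →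
      OracleRecursiveIn O fun n => g n >>= f
  | prec {f g : ℕ →. ℕ} : OracleRecursiveIn O f → OracleRecursiveIn O g →
      OracleRecursiveIn O (Nat.unpaired fun a n =>
        n.rec (f a) fun y IH => do let i ← IH; g (Nat.pair a (Nat.pair y i)))
  | rfind {f : ℕ →. ℕ} : OracleRecursiveIn O f →
      OracleRecursiveIn O fun a => Nat.rfind fun n => (fun m => m = 0) <$> f (Nat.pair a n)

/-- The characteristic function of a set of naturals. -/
noncomputable def charFn (H : Set ℕ) : ℕ → ℕ := H.indicator fun _ => 1

/-- A total function on ℕ is computable relative to (the characteristic function of) `H`. -/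
def OracleComputableIn (H : Set ℕ) (f : ℕ → ℕ) : Prop := OracleRecursiveIn (charFn H) ↑f

/-- `g` is limit-computable relative to `X`: some `X`-computable approximation
`h` converges pointwise to `g` in the limit of its second argument. -/
def LimitComputableIn (X : Set ℕ) (g : ℕ → ℕ) : Prop :=
  ∃ h : ℕ → ℕ → ℕ, OracleComputableIn X (fun n => h n.unpair.1 n.unpair.2) ∧
    ∀ x, ∃ s₀, ∀ s, s₀ ≤ s → h x s = g x

/-- `g` is limit-computable (with a computable approximation). -/
def LimitComputable (g : ℕ → ℕ) : Prop := LimitComputableIn ∅ g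

/-- The principal function of a set `X ⊆ ℕ`: `n ↦` the `(n+1)`-st smallest element. -/
noncomputable def principal (X : Set ℕ) : ℕ → ℕ := Nat.nth (· ∈ X)

namespace OracleRecursiveIn

variable {O : ℕ → ℕ}

theorem of_eq {f g : ℕ →. ℕ} (hf : OracleRecursiveIn O f) (h : ∀ n, f n = g n) :
    OracleRecursiveIn O g := funext h ▸ hf

theorem of_partrec {f : ℕ →. ℕ} (hf : Nat.Partrec f) : OracleRecursiveIn O f := by
  induction hf with
  | zero => exact .zero
  | succ => exact .succ
  | left => exact .left
  | right => exact .right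
  | pair _ _ ihf ihg => exact .pair ihf ihg
  | comp _ _ ihf ihg => exact .comp ihf ihg
  | prec _ _ ihf ihg => exact .prec ihf ihg
  | rfind _ ih => exact .rfind ih

theorem partrec_of_computable (hO : Computable O) {f : ℕ →. ℕ} (hf : OracleRecursiveIn O f) :
    Nat.Partrec f := by
  induction hf with
  | zero => exact .zero
  | succ => exact .succ
  | left => exact .left
  | right => exact .right
  | oracle => exact Partrec.nat_iff.1 hO
  | pair _ _ ihf ihg => exact .pair ihf ihg
  | comp _ _ ihf ihg => exact .comp ihf ihg
  | prec _ _ ihf ihg => exact .prec ihf ihg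
  | rfind _ ih => exact .rfind ih

theorem of_primrec {f : ℕ → ℕ} (hf : Nat.Primrec f) : OracleRecursiveIn O f :=
  of_partrec (Nat.Partrec.of_primrec hf)

theorem comp' {f g : ℕ → ℕ} (hf : OracleRecursiveIn O f) (hg : OracleRecursiveIn O g) :
    OracleRecursiveIn O ↑(fun n => f (g n)) :=
  (hf.comp hg).of_eq fun _ => Part.bind_some _ _

theorem pair' {f g : ℕ → ℕ} (hf : OracleRecursiveIn O f) (hg : OracleRecursiveIn O g) :
    OracleRecursiveIn O ↑(fun n => Nat.pair (f n) (g n)) :=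
  (hf.pair hg).of_eq fun n => by simp [PFun.coe_val, Seq.seq]

theorem comp₂ {f : ℕ → ℕ → ℕ} {g h : ℕ → ℕ}
    (hf : OracleRecursiveIn O ↑(fun n : ℕ => f n.unpair.1 n.unpair.2))
    (hg : OracleRecursiveIn O g) (hh : OracleRecursiveIn O h) :
    OracleRecursiveIn O ↑(fun n => f (g n) (h n)) :=
  (hf.comp' (hg.pair' hh)).of_eq fun n => by simp

theorem sum_range : OracleRecursiveIn O ↑(fun n => ∑ k ∈ Finset.range n, O k) := by
  have hstep :
      OracleRecursiveIn O ↑(fun m : ℕ => m.unpair.2.unpair.2 + O m.unpair.2.unpair.1) :=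
    comp₂ (f := (· + ·)) (of_primrec Nat.Primrec.add)
      (of_primrec (Nat.Primrec.right.comp Nat.Primrec.right))
      (oracle.comp' (g := fun m : ℕ => m.unpair.2.unpair.1)
        (of_primrec (Nat.Primrec.left.comp Nat.Primrec.right)))
  have hsum : OracleRecursiveIn O ↑(fun p : ℕ => ∑ k ∈ Finset.range p.unpair.2, O k) := by
    refine (prec zero hstep).of_eq fun p => ?_
    simp only [Nat.unpaired, PFun.coe_val]
    induction p.unpair.2 with
    | zero => rfl
    | succ n ih =>
      simp only [ih]
      simp [Finset.sum_range_succ]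
  exact (hsum.comp' (g := Nat.pair 0) (of_primrec (Nat.Primrec.pair .zero .id))).of_eq
    fun n => by simp

theorem of_zero_iff_le {f : ℕ → ℕ → ℕ} {g : ℕ → ℕ}
    (hf : OracleRecursiveIn O ↑(fun n : ℕ => f n.unpair.1 n.unpair.2))
    (hfg : ∀ a m, f a m = 0 ↔ g a ≤ m) : OracleRecursiveIn O ↑g :=
  (rfind hf).of_eq fun a => Part.eq_some_iff.2 <| Nat.mem_rfind.2
    ⟨by simpa using (hfg a (g a)).2 le_rfl, fun hm => by simpa [hfg] using hm⟩

end OracleRecursiveIn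

theorem count_eq_sum_charFn (H : Set ℕ) [DecidablePred (· ∈ H)] (n : ℕ) :
    Nat.count (· ∈ H) n = ∑ k ∈ Finset.range n, charFn H k := by
  induction n with
  | zero => rfl
  | succ n ih =>
    rw [Nat.count_succ, Finset.sum_range_succ, ih]
    simp [charFn, Set.indicator_apply]

theorem oracleComputableIn_principal {H : Set ℕ} (hH : H.Infinite) :
    OracleComputableIn H (principal H) := by
  classical
  open OracleRecursiveIn in
  have hcount : OracleRecursiveIn (charFn H) ↑(Nat.count (· ∈ H)) :=
    funext (count_eq_sum_charFn H) ▸ sum_range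
  refine of_zero_iff_le (f := fun a m => a + 1 - Nat.count (· ∈ H) (m + 1))
    (comp₂ (f := (· - ·)) (of_primrec Nat.Primrec.sub)
      (of_primrec (Nat.Primrec.succ.comp .left))
      (hcount.comp' (of_primrec (Nat.Primrec.succ.comp .right)))) fun a m => ?_
  rw [Nat.sub_eq_zero_iff_le, Nat.succ_le_iff, Nat.lt_nth_iff_count_lt (p := (· ∈ H)) hH,
    principal, Nat.lt_succ_iff]

theorem principal_le_principal_of_subset {A H : Set ℕ} (hH : H.Infinite) (hHA : H ⊆ A)
    (x : ℕ) : principal A x ≤ principal H x :=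
  Nat.nth_le_of_strictMonoOn_of_mapsTo _ (fun n _ => hHA (Nat.nth_mem_of_infinite hH n))
    ((Nat.nth_strictMono hH).strictMonoOn _)

theorem setOf_partrec_countable : {f : ℕ →. ℕ | Nat.Partrec f}.Countable :=
  (Set.countable_range Nat.Partrec.Code.eval).mono fun _ hf => Nat.Partrec.Code.exists_code.1 hf

theorem computable_charFn_empty : Computable (charFn ∅) := by
  rw [charFn, Set.indicator_empty]
  exact Computable.const 0

theorem setOf_limitComputable_countable : {g : ℕ → ℕ | LimitComputable g}.Countable := by
  set S := {h : ℕ → ℕ → ℕ | Nat.Partrec ↑(fun n : ℕ => h n.unpair.1 n.unpair.2)}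
  have hS : S.Countable := by
    refine Set.MapsTo.countable_of_injOn (f := fun h => ↑(fun n : ℕ => h n.unpair.1 n.unpair.2))
      (fun _ hh => hh) (fun h₁ _ h₂ _ heq => ?_) setOf_partrec_countable
    funext x s
    simpa using congrFun heq (Nat.pair x s)
  refine (hS.image fun h (x : ℕ) => Filter.limUnder Filter.atTop (h x)).mono ?_
  rintro g ⟨h, hh, hlim⟩
  refine ⟨h, hh.partrec_of_computable computable_charFn_empty, funext fun x => ?_⟩
  obtain ⟨s₀, hs₀⟩ := hlim x
  exact (tendsto_atTop_of_eventually_const hs₀).limUnder_eq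

theorem not_forall_principal_le_of_gap {X : Set ℕ} {g : ℕ → ℕ} {a b : ℕ} (hb : b ∈ X)
    (hgap : ∀ x, a ≤ x → x < b → x ∉ X) (hg : ∀ m ≤ a, g m < b) :
    ¬ ∀ x, principal X x ≤ g x := by
  classical
  intro hdom
  have hcount : Nat.count (· ∈ X) b ≤ a := by
    refine le_trans (not_lt.1 fun hlt => ?_) (Nat.count_le (· ∈ X))
    obtain ⟨x, ⟨hax, hxb⟩, hxX⟩ := Nat.exists_of_count_lt_count hlt
    exact hgap x hax hxb hxX
  have hle := hdom (Nat.count (· ∈ X) b)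
  rw [principal, Nat.nth_count hb] at hle
  exact (hg _ hcount).not_ge hle

def oddBlocks (a : ℕ → ℕ) : Set ℕ := {x | ∃ j, Odd j ∧ a j ≤ x ∧ x < a (j + 1)}

section OddBlocks

variable {a : ℕ → ℕ}

theorem mem_oddBlocks_iff (ha : StrictMono a) {j x : ℕ} (hjx : a j ≤ x) (hxj : x < a (j + 1)) :
    x ∈ oddBlocks a ↔ Odd j := by
  refine ⟨fun ⟨i, hi, hix, hxi⟩ => ?_, fun hj => ⟨j, hj, hjx, hxj⟩⟩
  have hij : i < j + 1 := ha.lt_iff_lt.1 (hix.trans_lt hxj)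
  have hji : j < i + 1 := ha.lt_iff_lt.1 (hjx.trans_lt hxi)
  rwa [show j = i by omega]

theorem mem_oddBlocks_self_iff (ha : StrictMono a) (j : ℕ) : a j ∈ oddBlocks a ↔ Odd j :=
  mem_oddBlocks_iff ha le_rfl (ha (Nat.lt_succ_self j))

theorem oddBlocks_infinite (ha : StrictMono a) : (oddBlocks a).Infinite :=
  Set.infinite_of_forall_exists_gt fun n =>
    ⟨a (2 * n + 1), (mem_oddBlocks_self_iff ha _).2 (odd_two_mul_add_one n),
      (by omega : n < 2 * n + 1).trans_le (ha.id_le _)⟩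

theorem compl_oddBlocks_infinite (ha : StrictMono a) : (oddBlocks a)ᶜ.Infinite :=
  Set.infinite_of_forall_exists_gt fun n =>
    ⟨a (2 * n + 2), by simp [mem_oddBlocks_self_iff ha, Nat.odd_add_one],
      (by omega : n < 2 * n + 2).trans_le (ha.id_le _)⟩

end OddBlocks

noncomputable def escapeSeq (e : ℕ → ℕ → ℕ) : ℕ → ℕ
  | 0 => 0
  | j + 1 => escapeSeq e j + 1 + (Finset.range (escapeSeq e j + 1)).sup (e (j / 2))

theorem escapeSeq_strictMono (e : ℕ → ℕ → ℕ) : StrictMono (escapeSeq e) :=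
  strictMono_nat_of_lt_succ fun j => by rw [escapeSeq]; omega

theorem lt_escapeSeq_succ (e : ℕ → ℕ → ℕ) {j m : ℕ} (hm : m ≤ escapeSeq e j) :
    e (j / 2) m < escapeSeq e (j + 1) := by
  have := Finset.le_sup (f := e (j / 2)) (Finset.mem_range.2 (Nat.lt_add_one_of_le hm))
  rw [escapeSeq]
  omega

theorem exists_principal_not_dominated {S : Set (ℕ → ℕ)} (hS : S.Countable) :
    ∃ A : Set ℕ, A.Infinite ∧ Aᶜ.Infinite ∧
      ∀ g ∈ S, (¬ ∀ x, principal A x ≤ g x) ∧ ¬ ∀ x, principal Aᶜ x ≤ g x := by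
  obtain ⟨e, hSe⟩ := Set.countable_iff_exists_subset_range.1 hS
  have ha := escapeSeq_strictMono e
  refine ⟨oddBlocks (escapeSeq e), oddBlocks_infinite ha, compl_oddBlocks_infinite ha, ?_⟩
  rintro g hg
  obtain ⟨k, rfl⟩ := hSe hg
  constructor
  · refine not_forall_principal_le_of_gap
      (a := escapeSeq e (2 * k)) (b := escapeSeq e (2 * k + 1))
      ((mem_oddBlocks_self_iff ha _).2 (odd_two_mul_add_one k)) (fun x h₁ h₂ => ?_)
      (fun m hm => ?_)
    · simp [mem_oddBlocks_iff ha h₁ h₂]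
    · simpa using lt_escapeSeq_succ e hm
  · refine not_forall_principal_le_of_gap
      (a := escapeSeq e (2 * k + 1)) (b := escapeSeq e (2 * k + 2))
      (by simp [mem_oddBlocks_self_iff ha, Nat.odd_add_one]) (fun x h₁ h₂ => ?_)
      (fun m hm => ?_)
    · simp [mem_oddBlocks_iff ha h₁ h₂]
    · have := lt_escapeSeq_succ e hm
      rwa [show (2 * k + 1) / 2 = k by omega] at this

/-- There is a bi-infinite set `A` such that neither the principal function of `A` nor
that of its complement is dominated by a limit-computable function (i.e. both are
∅′-hyperimmune); yet for every infinite `H ⊆ A` the `H`-computable function `p_H`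
dominates `p_A`, and likewise on the complement side. Hence preservation of
∅′-hyperimmunity cannot be extended to two functions simultaneously. -/
theorem two_delta2_hyperimmunities_not_preservable :
    ∃ A : Set ℕ, A.Infinite ∧ Aᶜ.Infinite ∧
      (∀ g : ℕ → ℕ, LimitComputable g → ¬ ∀ x, principal A x ≤ g x) ∧
      (∀ g : ℕ → ℕ, LimitComputable g → ¬ ∀ x, principal Aᶜ x ≤ g x) ∧
      (∀ H : Set ℕ, H.Infinite → H ⊆ A →
        OracleComputableIn H (principal H) ∧ ∀ x, principal A x ≤ principal H x) ∧
      (∀ H : Set ℕ, H.Infinite → H ⊆ Aᶜ →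
        OracleComputableIn H (principal H) ∧ ∀ x, principal Aᶜ x ≤ principal H x) := by
  obtain ⟨A, hA, hAc, hdiag⟩ := exists_principal_not_dominated setOf_limitComputable_countable
  refine ⟨A, hA, hAc, fun g hg => (hdiag g hg).1, fun g hg => (hdiag g hg).2, ?_, ?_⟩ <;>
    exact fun H hH hHA =>
      ⟨oracleComputableIn_principal hH, principal_le_principal_of_subset hH hHA⟩
end
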